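/- arXiv:2005.01350 — 3 statements merged into one kernel-verified Lean document; each statement's English description precedes it below -/
import Mathlib

section
/- Let μ₁ and μ₂ be probability measures on a measurable space X and let κ be a Markov kernel from X to a measurable space Y. Then d_TV(μ₁ ⊗ κ, μ₂ ⊗ κ) = d_TV(μ₁, μ₂); that is, appending the same transition kernel to two distributions leaves their total variation distance unchanged. -/
open MeasureTheory ProbabilityTheory

/-- Total variation distance between two measures:
`d_TV(μ, ν) = sup_{A measurable} |μ(A) − ν(A)|`. -/
noncomputable def tvDist {Ω : Type*} [MeasurableSpace Ω] (μ ν : Measure Ω) : ℝ :=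
  ⨆ A : {A : Set Ω // MeasurableSet A}, |(μ A.1).toReal - (ν A.1).toReal|

lemma tvDist_bdd {Ω : Type*} [MeasurableSpace Ω] (μ ν : Measure Ω)
    [IsProbabilityMeasure μ] [IsProbabilityMeasure ν] :
    BddAbove (Set.range fun A : {A : Set Ω // MeasurableSet A} =>
      |(μ A.1).toReal - (ν A.1).toReal|) := by
  refine ⟨1, ?_⟩
  rintro x ⟨A, rfl⟩
  have h1 : (μ A.1).toReal ≤ 1 := by
    simpa using ENNReal.toReal_mono ENNReal.one_ne_top (prob_le_one (μ := μ) (s := A.1))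
  have h2 : (ν A.1).toReal ≤ 1 := by
    simpa using ENNReal.toReal_mono ENNReal.one_ne_top (prob_le_one (μ := ν) (s := A.1))
  have h1' : 0 ≤ (μ A.1).toReal := ENNReal.toReal_nonneg
  have h2' : 0 ≤ (ν A.1).toReal := ENNReal.toReal_nonneg
  rw [abs_sub_le_iff]
  constructor <;> linarith

lemma le_tvDist {Ω : Type*} [MeasurableSpace Ω] (μ ν : Measure Ω)
    [IsProbabilityMeasure μ] [IsProbabilityMeasure ν] {A : Set Ω} (hA : MeasurableSet A) :
    |(μ A).toReal - (ν A).toReal| ≤ tvDist μ ν :=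
  le_ciSup (tvDist_bdd μ ν) ⟨A, hA⟩

lemma tvDist_comm {Ω : Type*} [MeasurableSpace Ω] (μ ν : Measure Ω) :
    tvDist μ ν = tvDist ν μ := by
  unfold tvDist
  congr 1
  ext A
  exact abs_sub_comm _ _

/-- key one-sided bound -/
lemma compProd_diff_le {X Y : Type*} [MeasurableSpace X] [MeasurableSpace Y]
    (μ₁ μ₂ : Measure X) [IsProbabilityMeasure μ₁] [IsProbabilityMeasure μ₂]
    (κ : Kernel X Y) [IsMarkovKernel κ] {S : Set (X × Y)} (hS : MeasurableSet S) :
    ((μ₁ ⊗ₘ κ) S).toReal - ((μ₂ ⊗ₘ κ) S).toReal ≤ tvDist μ₁ μ₂ := by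
  obtain ⟨s, hs, hs₁, hs₂⟩ := hahn_decomposition (μ := μ₁) (ν := μ₂)
  -- μ₂ t ≤ μ₁ t for t ⊆ s, μ₁ t ≤ μ₂ t for t ⊆ sᶜ
  set f : X → ENNReal := fun x => κ x (Prod.mk x ⁻¹' S) with hf
  have hfm : Measurable f := Kernel.measurable_kernel_prodMk_left hS
  have hf1 : ∀ x, f x ≤ 1 := fun x => prob_le_one
  have happ : ∀ (μ : Measure X) [SFinite μ], (μ ⊗ₘ κ) S = ∫⁻ x, f x ∂μ := fun μ _ =>
    Measure.compProd_apply hS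
  have hres1 : μ₂.restrict s ≤ μ₁.restrict s := by
    rw [Measure.le_iff]
    intro t ht
    rw [Measure.restrict_apply ht, Measure.restrict_apply ht]
    exact hs₁ _ (ht.inter hs) Set.inter_subset_right
  have hres2 : μ₁.restrict sᶜ ≤ μ₂.restrict sᶜ := by
    rw [Measure.le_iff]
    intro t ht
    rw [Measure.restrict_apply ht, Measure.restrict_apply ht]
    exact hs₂ _ (ht.inter hs.compl) Set.inter_subset_right
  -- bound on s
  have key : ∫⁻ x, f x ∂μ₁ ≤ ∫⁻ x, f x ∂μ₂ + (μ₁ s - μ₂ s) := by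
    have hsplit1 : ∫⁻ x, f x ∂μ₁ = ∫⁻ x in s, f x ∂μ₁ + ∫⁻ x in sᶜ, f x ∂μ₁ := by
      rw [← lintegral_add_measure, Measure.restrict_add_restrict_compl hs]
    have hsplit2 : ∫⁻ x, f x ∂μ₂ = ∫⁻ x in s, f x ∂μ₂ + ∫⁻ x in sᶜ, f x ∂μ₂ := by
      rw [← lintegral_add_measure, Measure.restrict_add_restrict_compl hs]
    have h2 : ∫⁻ x in sᶜ, f x ∂μ₁ ≤ ∫⁻ x in sᶜ, f x ∂μ₂ := lintegral_mono' hres2 le_rfl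
    have h1 : ∫⁻ x in s, f x ∂μ₁ ≤ ∫⁻ x in s, f x ∂μ₂ + (μ₁ s - μ₂ s) := by
      have hdecomp : μ₁.restrict s = μ₂.restrict s + (μ₁.restrict s - μ₂.restrict s) := by
        rw [add_comm, Measure.sub_add_cancel_of_le hres1]
      have hν : (μ₁.restrict s - μ₂.restrict s) Set.univ = μ₁ s - μ₂ s := by
        rw [Measure.sub_apply MeasurableSet.univ hres1, Measure.restrict_apply_univ,
          Measure.restrict_apply_univ]
      calc ∫⁻ x in s, f x ∂μ₁
          = ∫⁻ x in s, f x ∂μ₂ + ∫⁻ x, f x ∂(μ₁.restrict s - μ₂.restrict s) := by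
            rw [← lintegral_add_measure, ← hdecomp]
        _ ≤ ∫⁻ x in s, f x ∂μ₂ + (μ₁ s - μ₂ s) := by
            gcongr
            calc ∫⁻ x, f x ∂(μ₁.restrict s - μ₂.restrict s)
                ≤ ∫⁻ _, 1 ∂(μ₁.restrict s - μ₂.restrict s) := lintegral_mono hf1
              _ = _ := by rw [lintegral_one, hν]
    calc ∫⁻ x, f x ∂μ₁ = ∫⁻ x in s, f x ∂μ₁ + ∫⁻ x in sᶜ, f x ∂μ₁ := hsplit1
      _ ≤ (∫⁻ x in s, f x ∂μ₂ + (μ₁ s - μ₂ s)) + ∫⁻ x in sᶜ, f x ∂μ₂ := by gcongr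
      _ = ∫⁻ x, f x ∂μ₂ + (μ₁ s - μ₂ s) := by rw [hsplit2]; ring
  have hle : (μ₁ ⊗ₘ κ) S ≤ (μ₂ ⊗ₘ κ) S + (μ₁ s - μ₂ s) := by
    rw [happ μ₁, happ μ₂]; exact key
  have hfin : ∀ (μ : Measure X) [IsProbabilityMeasure μ], (μ ⊗ₘ κ) S ≠ ⊤ := by
    intro μ _; exact measure_ne_top _ _
  have hreal : ((μ₁ ⊗ₘ κ) S).toReal ≤ ((μ₂ ⊗ₘ κ) S).toReal + ((μ₁ s).toReal - (μ₂ s).toReal) := by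
    have := ENNReal.toReal_mono (by finiteness) hle
    rw [ENNReal.toReal_add (hfin μ₂) (by finiteness),
      ENNReal.toReal_sub_of_le (hs₁ s hs subset_rfl) (measure_ne_top _ _)] at this
    exact this
  have hs_le : (μ₁ s).toReal - (μ₂ s).toReal ≤ tvDist μ₁ μ₂ :=
    (le_abs_self _).trans (le_tvDist μ₁ μ₂ hs)
  linarith

/-- Appending the same Markov kernel to two probability measures leaves the
total variation distance unchanged: `d_TV(μ₁ ⊗ κ, μ₂ ⊗ κ) = d_TV(μ₁, μ₂)`. -/
theorem tvDist_compProd_same_kernel {X Y : Type*} [MeasurableSpace X] [MeasurableSpace Y]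
    (μ₁ μ₂ : Measure X) [IsProbabilityMeasure μ₁] [IsProbabilityMeasure μ₂]
    (κ : Kernel X Y) [IsMarkovKernel κ] :
    tvDist (μ₁ ⊗ₘ κ) (μ₂ ⊗ₘ κ) = tvDist μ₁ μ₂ := by
  apply le_antisymm
  · apply ciSup_le
    rintro ⟨S, hS⟩
    rw [abs_sub_le_iff]
    refine ⟨compProd_diff_le μ₁ μ₂ κ hS, ?_⟩
    rw [tvDist_comm]
    exact compProd_diff_le μ₂ μ₁ κ hS
  · apply ciSup_le
    rintro ⟨A, hA⟩
    have h : ∀ (μ : Measure X) [IsProbabilityMeasure μ],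
        (μ ⊗ₘ κ) (A ×ˢ Set.univ) = μ A := by
      intro μ _
      rw [Measure.compProd_apply_prod hA MeasurableSet.univ]
      simp
    have := le_tvDist (μ₁ ⊗ₘ κ) (μ₂ ⊗ₘ κ) (hA.prod MeasurableSet.univ)
    rwa [h μ₁, h μ₂] at this
end

section
/- Let ν₁ and ν₂ be probability measures on a measurable space Ω, let r : Ω → ℝ be measurable with |r(x)| ≤ U_r for all x, and let φ : Ω → ℝ^d be measurable with ‖φ(x)‖ ≤ 1 for all x. Define Jᵢ := ∫ r dνᵢ and bᵢ := ∫ r(x) φ(x) dνᵢ(x) − Jᵢ ∫ φ(x) dνᵢ(x) for i = 1, 2. Then ‖b₁ − b₂‖ ≤ 6 U_r · d_TV(ν₁, ν₂). -/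
/-!
Write `ν₁, ν₂` as densities `g₁, g₂` with respect to `ν₁ + ν₂`. For any `f` with `‖f‖ ≤ C`,
`‖∫ f dν₁ - ∫ f dν₂‖ ≤ C ∫ |g₁ - g₂|`, and splitting `∫ |g₁ - g₂|` along `{g₁ ≥ g₂}` and its
complement bounds it by `2 d_TV(ν₁, ν₂)`. With `Iᵢ := ∫ r φ dνᵢ` and `Pᵢ := ∫ φ dνᵢ`,
`b₁ - b₂ = (I₁ - I₂) - (J₁ - J₂) P₁ - J₂ (P₁ - P₂)`, and since `‖P₁‖ ≤ 1` and `|J₂| ≤ U_r`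
each of the three terms is at most `2 U_r d_TV(ν₁, ν₂)`.
-/

open MeasureTheory

open Set

section TotalVariation

variable {Ω : Type*} [MeasurableSpace Ω] {μ ν : Measure Ω}

lemma tvDist_bddAbove [IsFiniteMeasure μ] [IsFiniteMeasure ν] :
    BddAbove (range fun A : {A : Set Ω // MeasurableSet A} =>
      |(μ A.1).toReal - (ν A.1).toReal|) := by
  refine ⟨μ.real univ + ν.real univ, ?_⟩
  rintro _ ⟨A, rfl⟩
  have hμA : μ.real A.1 ≤ μ.real univ := measureReal_mono (subset_univ _)
  have hνA : ν.real A.1 ≤ ν.real univ := measureReal_mono (subset_univ _)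
  simp only [← measureReal_def, abs_sub_le_iff]
  constructor <;> linarith [measureReal_nonneg (μ := μ) (s := A.1),
    measureReal_nonneg (μ := ν) (s := A.1)]

lemma abs_measureReal_sub_le_tvDist [IsFiniteMeasure μ] [IsFiniteMeasure ν] {A : Set Ω}
    (hA : MeasurableSet A) : |μ.real A - ν.real A| ≤ tvDist μ ν :=
  le_ciSup tvDist_bddAbove ⟨A, hA⟩

end TotalVariation

lemma norm_sub_smul_sub_sub_smul_le {𝕜 E : Type*} [NormedField 𝕜] [SeminormedAddCommGroup E]
    [NormedSpace 𝕜 E] (a₁ a₂ p₁ p₂ : E) (s₁ s₂ : 𝕜) :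
    ‖(a₁ - s₁ • p₁) - (a₂ - s₂ • p₂)‖ ≤
      ‖a₁ - a₂‖ + ‖s₁ - s₂‖ * ‖p₁‖ + ‖s₂‖ * ‖p₁ - p₂‖ := by
  have hsplit : (a₁ - s₁ • p₁) - (a₂ - s₂ • p₂) =
      (a₁ - a₂) - ((s₁ - s₂) • p₁ + s₂ • (p₁ - p₂)) := by
    simp only [sub_smul, smul_sub]
    abel
  rw [hsplit]
  calc _ ≤ ‖a₁ - a₂‖ + ‖(s₁ - s₂) • p₁ + s₂ • (p₁ - p₂)‖ := norm_sub_le _ _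
    _ ≤ ‖a₁ - a₂‖ + (‖(s₁ - s₂) • p₁‖ + ‖s₂ • (p₁ - p₂)‖) := by gcongr; exact norm_add_le _ _
    _ = _ := by rw [norm_smul, norm_smul, add_assoc]

lemma integral_abs_sub_toReal_rnDeriv_le_two_mul_tvDist {Ω : Type*} [MeasurableSpace Ω]
    {μ ν₁ ν₂ : Measure Ω} [IsFiniteMeasure ν₁] [IsFiniteMeasure ν₂] [SigmaFinite μ]
    (h₁ : ν₁ ≪ μ) (h₂ : ν₂ ≪ μ) :
    ∫ x, |(ν₁.rnDeriv μ x).toReal - (ν₂.rnDeriv μ x).toReal| ∂μ ≤ 2 * tvDist ν₁ ν₂ := by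
  set g : Ω → ℝ := fun x => (ν₁.rnDeriv μ x).toReal - (ν₂.rnDeriv μ x).toReal
  have hg : Integrable g μ :=
    Measure.integrable_toReal_rnDeriv.sub Measure.integrable_toReal_rnDeriv
  have hg_set : ∀ s, ∫ x in s, g x ∂μ = ν₁.real s - ν₂.real s := fun s => by
    rw [integral_sub Measure.integrable_toReal_rnDeriv.integrableOn
      Measure.integrable_toReal_rnDeriv.integrableOn, Measure.setIntegral_toReal_rnDeriv h₁,
      Measure.setIntegral_toReal_rnDeriv h₂]
  set A := {x | 0 ≤ g x}
  have hA : MeasurableSet A := measurableSet_le measurable_const (by fun_prop)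
  have h_on_A : ∫ x in A, |g x| ∂μ = ∫ x in A, g x ∂μ :=
    setIntegral_congr_fun hA fun x hx => abs_of_nonneg hx
  have h_on_Ac : ∫ x in Aᶜ, |g x| ∂μ = -∫ x in Aᶜ, g x ∂μ := by
    rw [← integral_neg]
    exact setIntegral_congr_fun hA.compl fun x hx => abs_of_neg (not_le.1 hx)
  calc ∫ x, |g x| ∂μ = ∫ x in A, |g x| ∂μ + ∫ x in Aᶜ, |g x| ∂μ :=
        (integral_add_compl hA hg.abs).symm
    _ = (ν₁.real A - ν₂.real A) - (ν₁.real Aᶜ - ν₂.real Aᶜ) := by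
        rw [h_on_A, h_on_Ac, hg_set, hg_set, ← sub_eq_add_neg]
    _ ≤ 2 * tvDist ν₁ ν₂ := by
        have hA_le := abs_le.1 (abs_measureReal_sub_le_tvDist (μ := ν₁) (ν := ν₂) hA)
        have hAc_le := abs_le.1 (abs_measureReal_sub_le_tvDist (μ := ν₁) (ν := ν₂) hA.compl)
        linarith [hA_le.2, hAc_le.1]

lemma norm_integral_sub_integral_le_two_mul_tvDist {Ω E : Type*} [MeasurableSpace Ω]
    [NormedAddCommGroup E] [NormedSpace ℝ E] (ν₁ ν₂ : Measure Ω) [IsProbabilityMeasure ν₁]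
    [IsProbabilityMeasure ν₂] {f : Ω → E} (hf : StronglyMeasurable f) {C : ℝ}
    (hC : ∀ x, ‖f x‖ ≤ C) :
    ‖(∫ x, f x ∂ν₁) - ∫ x, f x ∂ν₂‖ ≤ 2 * C * tvDist ν₁ ν₂ := by
  obtain ⟨x₀⟩ := nonempty_of_isProbabilityMeasure ν₁
  have hC₀ : 0 ≤ C := (norm_nonneg _).trans (hC x₀)
  set μ := ν₁ + ν₂
  have h₁ : ν₁ ≪ μ := Measure.AbsolutelyContinuous.rfl.add_right ν₂
  have h₂ : ν₂ ≪ μ := Measure.AbsolutelyContinuous.rfl.add_right' ν₁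
  set g₁ : Ω → ℝ := fun x => (ν₁.rnDeriv μ x).toReal
  set g₂ : Ω → ℝ := fun x => (ν₂.rnDeriv μ x).toReal
  have hf_int : ∀ (ν : Measure Ω) [IsFiniteMeasure ν], Integrable f ν := fun ν _ =>
    .of_bound hf.aestronglyMeasurable C (ae_of_all _ hC)
  have hg_int : Integrable (fun x => |g₁ x - g₂ x|) μ :=
    (Measure.integrable_toReal_rnDeriv.sub Measure.integrable_toReal_rnDeriv).abs
  calc ‖(∫ x, f x ∂ν₁) - ∫ x, f x ∂ν₂‖ = ‖∫ x, (g₁ x - g₂ x) • f x ∂μ‖ := by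
        simp only [sub_smul]
        rw [integral_sub ((integrable_rnDeriv_smul_iff h₁).2 (hf_int ν₁))
          ((integrable_rnDeriv_smul_iff h₂).2 (hf_int ν₂)), integral_rnDeriv_smul h₁,
          integral_rnDeriv_smul h₂]
    _ ≤ ∫ x, C * |g₁ x - g₂ x| ∂μ := by
        refine norm_integral_le_of_norm_le (hg_int.const_mul C) (ae_of_all _ fun x => ?_)
        rw [norm_smul, Real.norm_eq_abs, mul_comm]
        exact mul_le_mul_of_nonneg_right (hC x) (abs_nonneg _)
    _ = C * ∫ x, |g₁ x - g₂ x| ∂μ := integral_const_mul _ _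
    _ ≤ C * (2 * tvDist ν₁ ν₂) := by
        gcongr
        exact integral_abs_sub_toReal_rnDeriv_le_two_mul_tvDist h₁ h₂
    _ = 2 * C * tvDist ν₁ ν₂ := by ring

/-- With `J_i := ∫ r dν_i` and `b_i := ∫ r φ dν_i − J_i ∫ φ dν_i`, where `|r| ≤ U_r`
and `‖φ‖ ≤ 1`, one has `‖b₁ − b₂‖ ≤ 6 U_r · d_TV(ν₁, ν₂)`. -/
theorem norm_b_sub_b_le_tvDist {Ω : Type*} [MeasurableSpace Ω] {d : ℕ}
    (ν₁ ν₂ : Measure Ω) [IsProbabilityMeasure ν₁] [IsProbabilityMeasure ν₂]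
    (r : Ω → ℝ) (hrm : Measurable r) (Ur : ℝ) (hr : ∀ x, |r x| ≤ Ur)
    (φ : Ω → EuclideanSpace ℝ (Fin d)) (hφm : Measurable φ) (hφ : ∀ x, ‖φ x‖ ≤ 1) :
    ‖((∫ x, r x • φ x ∂ν₁) - (∫ x, r x ∂ν₁) • ∫ x, φ x ∂ν₁) -
        ((∫ x, r x • φ x ∂ν₂) - (∫ x, r x ∂ν₂) • ∫ x, φ x ∂ν₂)‖ ≤
      6 * Ur * tvDist ν₁ ν₂ := by
  obtain ⟨x₀⟩ := nonempty_of_isProbabilityMeasure ν₁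
  have hUr : 0 ≤ Ur := (abs_nonneg _).trans (hr x₀)
  have hr' : ∀ x, ‖r x‖ ≤ Ur := hr
  have hrφ : ∀ x, ‖r x • φ x‖ ≤ Ur := fun x => by
    simpa [norm_smul] using mul_le_mul (hr' x) (hφ x) (norm_nonneg _) hUr
  have hI := norm_integral_sub_integral_le_two_mul_tvDist ν₁ ν₂ (f := fun x => r x • φ x)
    (hrm.stronglyMeasurable.smul hφm.stronglyMeasurable) hrφ
  have hJ := norm_integral_sub_integral_le_two_mul_tvDist ν₁ ν₂ hrm.stronglyMeasurable hr'
  have hP := norm_integral_sub_integral_le_two_mul_tvDist ν₁ ν₂ hφm.stronglyMeasurable hφ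
  have hP₁ : ‖∫ x, φ x ∂ν₁‖ ≤ 1 := by
    simpa using norm_integral_le_of_norm_le_const (μ := ν₁) (ae_of_all _ hφ)
  have hJ₂ : ‖∫ x, r x ∂ν₂‖ ≤ Ur := by
    simpa using norm_integral_le_of_norm_le_const (μ := ν₂) (ae_of_all _ hr')
  calc _ ≤ _ := norm_sub_smul_sub_sub_smul_le _ _ _ _ _ _
    _ ≤ 2 * Ur * tvDist ν₁ ν₂ + 2 * Ur * tvDist ν₁ ν₂ + Ur * (2 * 1 * tvDist ν₁ ν₂) := by
        have hJP₁ := (mul_le_of_le_one_right (norm_nonneg _) hP₁).trans hJ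
        have hJ₂P := mul_le_mul hJ₂ hP (norm_nonneg _) hUr
        linarith
    _ = 6 * Ur * tvDist ν₁ ν₂ := by ring
end

section
/- Let ν be a probability measure on a measurable space Ω, let φ, ψ : Ω → ℝ^d be measurable with ‖φ(x)‖ ≤ 1 and ‖ψ(x)‖ ≤ 1 for all x, and let h : Ω → ℝ be measurable with |h(x)| ≤ 2U_r for all x. For ω ∈ ℝ^d define g(x, ω) := (h(x) + ⟨ψ(x) − φ(x), ω⟩) φ(x) and ḡ(ω) := ∫ g(x, ω) dν(x). Let R > 0 and set U_δ := 2U_r + 2R. Then for any fixed x₀ ∈ Ω and any ω₁, ω₂, ω* ∈ ℝ^d with ‖ω₁‖ ≤ R, ‖ω₂‖ ≤ R, ‖ω*‖ ≤ R, one has |⟨ω₁ − ω*, g(x₀, ω₁) − ḡ(ω₁)⟩ − ⟨ω₂ − ω*, g(x₀, ω₂) − ḡ(ω₂)⟩| ≤ 6 U_δ ‖ω₁ − ω₂‖. -/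
open MeasureTheory
open scoped RealInnerProductSpace

/-- Lipschitz continuity in `ω` of the Markovian-noise functional
`Λ(x₀, ω) = ⟨ω − ω*, g(x₀, ω) − ḡ(ω)⟩` where
`g(x, ω) = (h(x) + ⟨ψ(x) − φ(x), ω⟩) φ(x)` and `ḡ(ω) = ∫ g(x, ω) dν(x)`:
with `|h| ≤ 2U_r`, `‖φ‖, ‖ψ‖ ≤ 1`, `U_δ = 2U_r + 2R`, and `ω₁, ω₂, ω*` in the
ball of radius `R`, the difference is bounded by `6 U_δ ‖ω₁ − ω₂‖`. -/
theorem markovian_noise_lipschitz_in_omega {Ω : Type*} [MeasurableSpace Ω] {d : ℕ}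
    (ν : Measure Ω) [IsProbabilityMeasure ν]
    (φ ψ : Ω → EuclideanSpace ℝ (Fin d)) (hφm : Measurable φ) (hψm : Measurable ψ)
    (hφ : ∀ x, ‖φ x‖ ≤ 1) (hψ : ∀ x, ‖ψ x‖ ≤ 1)
    (h : Ω → ℝ) (hhm : Measurable h) (Ur : ℝ) (hh : ∀ x, |h x| ≤ 2 * Ur)
    (R : ℝ) (hR : 0 < R)
    (x₀ : Ω) (ω₁ ω₂ ωstar : EuclideanSpace ℝ (Fin d))
    (hω₁ : ‖ω₁‖ ≤ R) (hω₂ : ‖ω₂‖ ≤ R) (hωs : ‖ωstar‖ ≤ R) :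
    |⟪ω₁ - ωstar,
        (h x₀ + ⟪ψ x₀ - φ x₀, ω₁⟫) • φ x₀ -
          ∫ x, (h x + ⟪ψ x - φ x, ω₁⟫) • φ x ∂ν⟫ -
      ⟪ω₂ - ωstar,
        (h x₀ + ⟪ψ x₀ - φ x₀, ω₂⟫) • φ x₀ -
          ∫ x, (h x + ⟪ψ x - φ x, ω₂⟫) • φ x ∂ν⟫| ≤
      6 * (2 * Ur + 2 * R) * ‖ω₁ - ω₂‖ := by
  -- Ω is nonempty since ν is a probability measure
  have hΩ : Nonempty Ω := by
    by_contra hne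
    rw [not_nonempty_iff] at hne
    have h1 : ν Set.univ = 1 := measure_univ
    rw [Set.univ_eq_empty_iff.mpr hne, measure_empty] at h1
    exact zero_ne_one h1
  obtain ⟨xw⟩ := hΩ
  have hUr : 0 ≤ Ur := by
    have := hh xw; have := abs_nonneg (h xw); linarith
  set Uδ : ℝ := 2 * Ur + 2 * R with hUδ
  have hUδpos : 0 < Uδ := by positivity
  set g : EuclideanSpace ℝ (Fin d) → Ω → EuclideanSpace ℝ (Fin d) :=
    fun ω x => (h x + ⟪ψ x - φ x, ω⟫) • φ x with hg
  have hnd : ∀ x, ‖ψ x - φ x‖ ≤ 2 := fun x =>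
    (norm_sub_le _ _).trans (by linarith [hφ x, hψ x])
  have gb : ∀ (ω : EuclideanSpace ℝ (Fin d)), ‖ω‖ ≤ R → ∀ x, ‖g ω x‖ ≤ Uδ := by
    intro ω hω x
    rw [hg]
    simp only [norm_smul, Real.norm_eq_abs]
    have hi : |⟪ψ x - φ x, ω⟫| ≤ 2 * R := by
      calc |⟪ψ x - φ x, ω⟫| ≤ ‖ψ x - φ x‖ * ‖ω‖ := abs_real_inner_le_norm _ _
        _ ≤ 2 * R := mul_le_mul (hnd x) hω (norm_nonneg _) (by norm_num)
    have h1 : |h x + ⟪ψ x - φ x, ω⟫| ≤ Uδ := by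
      calc |h x + ⟪ψ x - φ x, ω⟫| ≤ |h x| + |⟪ψ x - φ x, ω⟫| := abs_add_le _ _
        _ ≤ Uδ := by rw [hUδ]; linarith [hh x]
    calc |h x + ⟪ψ x - φ x, ω⟫| * ‖φ x‖ ≤ Uδ * 1 :=
          mul_le_mul h1 (hφ x) (norm_nonneg _) hUδpos.le
      _ = Uδ := mul_one _
  have gm : ∀ ω : EuclideanSpace ℝ (Fin d), Measurable (g ω) := fun ω =>
    (hhm.add ((hψm.sub hφm).inner measurable_const)).smul hφm
  have gi : ∀ (ω : EuclideanSpace ℝ (Fin d)), ‖ω‖ ≤ R → Integrable (g ω) ν := fun ω hω =>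
    (integrable_const Uδ).mono' (gm ω).aestronglyMeasurable (ae_of_all _ (gb ω hω))
  have hInt : ∀ (ω : EuclideanSpace ℝ (Fin d)), ‖ω‖ ≤ R → ‖∫ x, g ω x ∂ν‖ ≤ Uδ := by
    intro ω hω
    have := norm_integral_le_of_norm_le_const (μ := ν) (ae_of_all _ (gb ω hω))
    simpa using this
  -- difference of g's
  have gdiff : ∀ x, g ω₁ x - g ω₂ x = ⟪ψ x - φ x, ω₁ - ω₂⟫ • φ x := by
    intro x
    rw [hg]
    simp only [inner_sub_right]
    rw [← sub_smul]
    ring_nf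
  have gdiffb : ∀ x, ‖g ω₁ x - g ω₂ x‖ ≤ 2 * ‖ω₁ - ω₂‖ := by
    intro x
    rw [gdiff x, norm_smul, Real.norm_eq_abs]
    calc |⟪ψ x - φ x, ω₁ - ω₂⟫| * ‖φ x‖
        ≤ (‖ψ x - φ x‖ * ‖ω₁ - ω₂‖) * 1 :=
          mul_le_mul (abs_real_inner_le_norm _ _) (hφ x) (norm_nonneg _)
            (by positivity)
      _ = ‖ψ x - φ x‖ * ‖ω₁ - ω₂‖ := mul_one _
      _ ≤ 2 * ‖ω₁ - ω₂‖ := mul_le_mul_of_nonneg_right (hnd x) (norm_nonneg _)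
  set b₁ : EuclideanSpace ℝ (Fin d) := g ω₁ x₀ - ∫ x, g ω₁ x ∂ν with hb₁
  set b₂ : EuclideanSpace ℝ (Fin d) := g ω₂ x₀ - ∫ x, g ω₂ x ∂ν with hb₂
  have hb1n : ‖b₁‖ ≤ 2 * Uδ := by
    calc ‖b₁‖ ≤ ‖g ω₁ x₀‖ + ‖∫ x, g ω₁ x ∂ν‖ := norm_sub_le _ _
      _ ≤ 2 * Uδ := by linarith [gb ω₁ hω₁ x₀, hInt ω₁ hω₁]
  have hIdiff : ‖(∫ x, g ω₁ x ∂ν) - ∫ x, g ω₂ x ∂ν‖ ≤ 2 * ‖ω₁ - ω₂‖ := by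
    rw [← integral_sub (gi ω₁ hω₁) (gi ω₂ hω₂)]
    have := norm_integral_le_of_norm_le_const (μ := ν) (ae_of_all _ gdiffb)
    simpa using this
  have hbdiff : ‖b₁ - b₂‖ ≤ 4 * ‖ω₁ - ω₂‖ := by
    have : b₁ - b₂ = (g ω₁ x₀ - g ω₂ x₀) - ((∫ x, g ω₁ x ∂ν) - ∫ x, g ω₂ x ∂ν) := by
      rw [hb₁, hb₂]; abel
    rw [this]
    calc ‖(g ω₁ x₀ - g ω₂ x₀) - ((∫ x, g ω₁ x ∂ν) - ∫ x, g ω₂ x ∂ν)‖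
        ≤ ‖g ω₁ x₀ - g ω₂ x₀‖ + ‖(∫ x, g ω₁ x ∂ν) - ∫ x, g ω₂ x ∂ν‖ := norm_sub_le _ _
      _ ≤ 4 * ‖ω₁ - ω₂‖ := by linarith [gdiffb x₀, hIdiff]
  have key : ⟪ω₁ - ωstar, b₁⟫ - ⟪ω₂ - ωstar, b₂⟫
      = ⟪ω₁ - ω₂, b₁⟫ + ⟪ω₂ - ωstar, b₁ - b₂⟫ := by
    simp only [inner_sub_left, inner_sub_right]
    ring
  have habs : |⟪ω₁ - ωstar, b₁⟫ - ⟪ω₂ - ωstar, b₂⟫| ≤ 6 * Uδ * ‖ω₁ - ω₂‖ := by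
    rw [key]
    have h1 : |⟪ω₁ - ω₂, b₁⟫| ≤ ‖ω₁ - ω₂‖ * (2 * Uδ) :=
      (abs_real_inner_le_norm _ _).trans
        (mul_le_mul_of_nonneg_left hb1n (norm_nonneg _))
    have h2 : |⟪ω₂ - ωstar, b₁ - b₂⟫| ≤ (2 * R) * (4 * ‖ω₁ - ω₂‖) := by
      refine (abs_real_inner_le_norm _ _).trans ?_
      have hnorm : ‖ω₂ - ωstar‖ ≤ 2 * R := (norm_sub_le _ _).trans (by linarith)
      exact mul_le_mul hnorm hbdiff (norm_nonneg _) (by linarith)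
    calc |⟪ω₁ - ω₂, b₁⟫ + ⟪ω₂ - ωstar, b₁ - b₂⟫|
        ≤ |⟪ω₁ - ω₂, b₁⟫| + |⟪ω₂ - ωstar, b₁ - b₂⟫| := abs_add_le _ _
      _ ≤ 6 * Uδ * ‖ω₁ - ω₂‖ := by
          have h2R : 2 * R ≤ Uδ := by rw [hUδ]; linarith
          nlinarith [norm_nonneg (ω₁ - ω₂)]
  exact habs
end
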